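/- arXiv:2307.14033 — 2 statements merged into one kernel-verified Lean document; each statement's English description precedes it below -/
import Mathlib

section
/- For m ≥ 4, the 3-percolation number of the grid P₄ □ Pₘ satisfies ⌊5(m+1)/3⌋ + 1 ≤ m(P₄ □ Pₘ, 3) ≤ ⌊5(m+1)/3⌋ + 2. -/
open SimpleGraph

/-- The set of vertices eventually infected in `r`-neighbor bootstrap percolation
on the graph `G`, starting from the initially infected set `A`. -/
inductive Infected {V : Type*} (G : SimpleGraph V) (r : ℕ) (A : Set V) : V → Prop
  | init {v : V} : v ∈ A → Infected G r A v
  | step {v : V} (T : Finset V) : r ≤ T.card → (∀ u ∈ T, G.Adj u v) →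
      (∀ u ∈ T, Infected G r A u) → Infected G r A v

/-- `A` is an `r`-percolating set of `G`. -/
def Percolates {V : Type*} (G : SimpleGraph V) (r : ℕ) (A : Set V) : Prop :=
  ∀ v, Infected G r A v

/-- The `r`-percolation number of `G`: minimum size of an `r`-percolating set. -/
noncomputable def percNum (V : Type*) [Fintype V] (G : SimpleGraph V) (r : ℕ) : ℕ :=
  sInf {k | ∃ A : Finset V, A.card = k ∧ Percolates G r (↑A)}

/-- The `n × m` grid graph `Pₙ □ Pₘ`. -/
def gridGraph (n m : ℕ) : SimpleGraph (Fin n × Fin m) :=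
  (pathGraph n) □ (pathGraph m)

/-- A boundary vertex of a grid: degree at most 3. -/
def IsBoundary {V : Type*} (G : SimpleGraph V) (v : V) : Prop :=
  (G.neighborSet v).ncard ≤ 3

/-!
Lower bound: write `e(S)` for the number of edges with both ends in `S`. A vertex that becomes
infected has at least three infected neighbours, so it raises `e` of the infected set by at least
three; hence a percolating set `A` satisfies `3 (4m - |A|) + e(A) ≤ e(P₄ □ Pₘ) = 7m - 4`. On each
short side the two corners have degree 2 and the two middle vertices are adjacent and of degree 3,
so `A` contains both corners and a middle vertex; this gives `e(A) ≥ 2`, i.e. `3 |A| ≥ 5m + 6`.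

Upper bound: take every cell `(i, j)` with `i + j` odd together with the corners, and drop one
interior odd cell in each column `j ≡ 0 (mod 3)` with `3 ≤ j ≤ m - 3`. A dropped cell is
re-infected by its three interior even neighbours, and afterwards every even cell other than a
corner sees at least three infected (odd) neighbours.
-/

open Finset

section Bootstrap

variable {V : Type*} {G : SimpleGraph V} {r : ℕ} {A : Set V}

theorem Infected.exists_notMem_of_notMem [DecidableEq V] {S : Finset V} (hAS : A ⊆ S) {v : V}
    (hv : Infected G r A v) (hvS : v ∉ S) :
    ∃ w ∉ S, ∃ T ⊆ S, r ≤ #T ∧ ∀ u ∈ T, G.Adj u w := by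
  induction hv with
  | init h => exact absurd (hAS h) hvS
  | @step v T hT hadj _ ih =>
    by_cases hTS : T ⊆ S
    · exact ⟨v, hvS, T, hTS, hT, hadj⟩
    · obtain ⟨u, hu, huS⟩ := not_subset.mp hTS
      exact ih u hu huS

section Finite

variable [Fintype V] [DecidableEq V] [DecidableRel G.Adj]

theorem card_edgeFinset_inter_sym2_add_le {S T : Finset V} {w : V} (hw : w ∉ S) (hTS : T ⊆ S)
    (hT : ∀ u ∈ T, G.Adj u w) :
    #(G.edgeFinset ∩ S.sym2) + #T ≤ #(G.edgeFinset ∩ (insert w S).sym2) := by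
  have hdisj : Disjoint (G.edgeFinset ∩ S.sym2) (T.image fun u => s(u, w)) := by
    refine disjoint_left.mpr fun e he he' => ?_
    obtain ⟨u, -, rfl⟩ := mem_image.mp he'
    exact hw (mem_sym2_iff.mp (mem_inter.mp he).2 w (Sym2.mem_mk_right u w))
  have hsub : (G.edgeFinset ∩ S.sym2) ∪ T.image (fun u => s(u, w)) ⊆
      G.edgeFinset ∩ (insert w S).sym2 := by
    refine union_subset (inter_subset_inter_left (sym2_mono (subset_insert w S))) ?_
    intro e he
    obtain ⟨u, hu, rfl⟩ := mem_image.mp he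
    exact mem_inter.mpr ⟨mem_edgeFinset.mpr (hT u hu),
      mk_mem_sym2_iff.mpr ⟨mem_insert_of_mem (hTS hu), mem_insert_self w S⟩⟩
  calc #(G.edgeFinset ∩ S.sym2) + #T
      = #((G.edgeFinset ∩ S.sym2) ∪ T.image (fun u => s(u, w))) := by
        rw [card_union_of_disjoint hdisj,
          card_image_of_injective _ fun u u' h => Sym2.congr_left.mp h]
    _ ≤ _ := card_le_card hsub

theorem Percolates.mul_card_compl_add_le {A : Finset V} (hA : Percolates G r A) :
    r * (Fintype.card V - #A) + #(G.edgeFinset ∩ A.sym2) ≤ #G.edgeFinset := by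
  suffices ∀ n (S : Finset V), A ⊆ S → Fintype.card V - #S = n →
      r * n + #(G.edgeFinset ∩ S.sym2) ≤ #G.edgeFinset from this _ A le_rfl rfl
  intro n
  induction n with
  | zero => exact fun S _ _ => by simpa using card_le_card inter_subset_left
  | succ n ih =>
    intro S hAS hn
    obtain ⟨x, hx⟩ : ∃ x, x ∉ S := by
      by_contra! h
      simp [eq_univ_of_forall h] at hn
    obtain ⟨w, hw, T, hTS, hT, hadj⟩ := (hA x).exists_notMem_of_notMem (coe_subset.mpr hAS) hx
    have := ih (insert w S) (hAS.trans (subset_insert w S))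
      (by rw [card_insert_of_notMem hw]; omega)
    have := card_edgeFinset_inter_sym2_add_le hw hTS hadj
    linarith [Nat.mul_succ r n]

end Finite

theorem Infected.mem_of_degree_lt {v : V} [Fintype (G.neighborSet v)] (hv : G.degree v < r)
    (h : Infected G r A v) : v ∈ A := by
  cases h with
  | init h => exact h
  | step T hT hadj _ =>
    have : T ⊆ G.neighborFinset v := fun u hu => (G.mem_neighborFinset v u).mpr (hadj u hu).symm
    exact absurd (hT.trans (card_le_card this)) (by simpa using hv)

theorem Infected.mem_or_mem_of_adj [DecidableEq V] [G.LocallyFinite] {p q : V}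
    (hpq : G.Adj p q) (hp : G.degree p ≤ r) (hq : G.degree q ≤ r) (h : Infected G r A p) :
    p ∈ A ∨ q ∈ A := by
  induction h generalizing q with
  | init h => exact Or.inl h
  | @step p T hT hadj _ ih =>
    by_cases hqT : q ∈ T
    · exact (ih q hqT hpq.symm hq hp).symm
    · have hTsub : T ⊆ (G.neighborFinset p).erase q := fun u hu => mem_erase.mpr
        ⟨ne_of_mem_of_not_mem hu hqT, (G.mem_neighborFinset p u).mpr (hadj u hu).symm⟩
      have hq' : q ∈ G.neighborFinset p := (G.mem_neighborFinset p q).mpr hpq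
      have := card_le_card hTsub
      rw [card_erase_of_mem hq', card_neighborFinset_eq_degree] at this
      have := G.degree_pos_iff_exists_adj p |>.mpr ⟨q, hpq⟩
      omega

theorem Infected.of_forall_adj {v : V} [Fintype (G.neighborSet v)] (hv : r ≤ G.degree v)
    (h : ∀ u, G.Adj u v → Infected G r A u) : Infected G r A v :=
  .step (G.neighborFinset v) hv (fun u hu => ((G.mem_neighborFinset v u).mp hu).symm)
    fun u hu => h u ((G.mem_neighborFinset v u).mp hu).symm

theorem Infected.of_forall_adj_ne [DecidableEq V] {v : V} [Fintype (G.neighborSet v)] (w : V)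
    (hv : r + 1 ≤ G.degree v) (h : ∀ u, G.Adj u v → u ≠ w → Infected G r A u) :
    Infected G r A v := by
  refine .step ((G.neighborFinset v).erase w) ?_ (fun u hu => ?_) fun u hu => ?_
  · have := pred_card_le_card_erase (a := w) (s := G.neighborFinset v)
    rw [card_neighborFinset_eq_degree] at this
    omega
  · exact ((G.mem_neighborFinset v u).mp (mem_of_mem_erase hu)).symm
  · exact h u ((G.mem_neighborFinset v u).mp (mem_of_mem_erase hu)).symm (ne_of_mem_erase hu)

theorem percNum_le [Fintype V] {A : Finset V} (hA : Percolates G r A) : percNum V G r ≤ #A :=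
  Nat.sInf_le ⟨A, rfl, hA⟩

theorem le_percNum [Fintype V] {k : ℕ} (hne : ∃ A : Finset V, Percolates G r A)
    (h : ∀ A : Finset V, Percolates G r A → k ≤ #A) : k ≤ percNum V G r := by
  obtain ⟨A, hA⟩ := hne
  obtain ⟨B, hB, hperc⟩ :=
    Nat.sInf_mem (s := {k | ∃ A : Finset V, #A = k ∧ Percolates G r A}) ⟨_, A, rfl, hA⟩
  rw [percNum, ← hB]
  exact h B hperc

end Bootstrap

instance (n : ℕ) : DecidableRel (pathGraph n).Adj := fun _ _ => decidable_of_iff' _ pathGraph_adj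

theorem gridGraph_adj {n m : ℕ} {u v : Fin n × Fin m} :
    (gridGraph n m).Adj u v ↔
      (pathGraph n).Adj u.1 v.1 ∧ u.2 = v.2 ∨ (pathGraph m).Adj u.2 v.2 ∧ u.1 = v.1 :=
  boxProd_adj

instance (n m : ℕ) : DecidableRel (gridGraph n m).Adj :=
  fun _ _ => decidable_of_iff' _ gridGraph_adj

theorem gridGraph_adj_iff_val {n m : ℕ} {u v : Fin n × Fin m} :
    (gridGraph n m).Adj u v ↔
      ((u.1 : ℕ) + 1 = v.1 ∨ (v.1 : ℕ) + 1 = u.1) ∧ (u.2 : ℕ) = v.2 ∨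
      ((u.2 : ℕ) + 1 = v.2 ∨ (v.2 : ℕ) + 1 = u.2) ∧ (u.1 : ℕ) = v.1 := by
  simp [gridGraph_adj, pathGraph_adj, Fin.ext_iff]

theorem mod_two_ne_of_gridGraph_adj {n m : ℕ} {i i' : Fin n} {j j' : Fin m}
    (h : (gridGraph n m).Adj (i, j) (i', j')) : ((i : ℕ) + j) % 2 ≠ ((i' : ℕ) + j') % 2 := by
  simp only [gridGraph_adj_iff_val] at h
  omega

theorem pathGraph_degree {n : ℕ} (i : Fin n) :
    (pathGraph n).degree i =
      (if (i : ℕ) = 0 then 0 else 1) + (if (i : ℕ) + 1 = n then 0 else 1) := by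
  have hmem (j : Fin n) :
      j ∈ (pathGraph n).neighborFinset i ↔ (i : ℕ) + 1 = j ∨ (j : ℕ) + 1 = i := by
    simp [pathGraph_adj]
  rw [← card_neighborFinset_eq_degree]
  split_ifs with h0 hl hl
  · exact card_eq_zero.mpr (eq_empty_of_forall_notMem fun j hj => by
      have := (hmem j).mp hj; omega)
  · refine card_eq_one.mpr ⟨⟨i + 1, by omega⟩, ?_⟩
    ext j; simp only [hmem, mem_singleton, Fin.ext_iff]; omega
  · refine card_eq_one.mpr ⟨⟨i - 1, by omega⟩, ?_⟩
    ext j; simp only [hmem, mem_singleton, Fin.ext_iff]; omega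
  · refine card_eq_two.mpr
      ⟨⟨i - 1, by omega⟩, ⟨i + 1, by omega⟩, by simp [Fin.ext_iff], ?_⟩
    ext j; simp only [hmem, mem_insert, mem_singleton, Fin.ext_iff]; omega

theorem sum_degree_pathGraph (n : ℕ) : ∑ i, (pathGraph n).degree i = 2 * (n - 1) := by
  cases n with
  | zero => simp
  | succ k =>
    simp only [pathGraph_degree, sum_add_distrib]
    rw [Fin.sum_univ_succ, Fin.sum_univ_castSucc]
    have hk (x : Fin k) : (x : ℕ) ≠ k := x.2.ne
    simp [hk]
    omega

theorem gridGraph_degree {n m : ℕ} (i : Fin n) (j : Fin m) :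
    (gridGraph n m).degree (i, j) = (pathGraph n).degree i + (pathGraph m).degree j := by
  unfold gridGraph
  convert degree_boxProd (i, j)

theorem four_le_gridGraph_degree {n m : ℕ} {i : Fin n} {j : Fin m} (hi : 0 < (i : ℕ))
    (hi' : (i : ℕ) + 1 < n) (hj : 0 < (j : ℕ)) (hj' : (j : ℕ) + 1 < m) :
    4 ≤ (gridGraph n m).degree (i, j) := by
  simp only [gridGraph_degree, pathGraph_degree]
  split_ifs <;> omega

theorem card_edgeFinset_gridGraph (n m : ℕ) :
    #(gridGraph n m).edgeFinset = n * (m - 1) + (n - 1) * m := by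
  have h := sum_degrees_eq_twice_card_edges (gridGraph n m)
  simp only [Fintype.sum_prod_type, gridGraph_degree, sum_add_distrib, sum_const, card_univ,
    Fintype.card_fin, smul_eq_mul, ← mul_sum, sum_degree_pathGraph] at h
  linarith

section LowerBound

variable {m : ℕ} {A : Finset (Fin 4 × Fin m)}

theorem Percolates.exists_adj_mem_of_degree_le_one (hA : Percolates (gridGraph 4 m) 3 A)
    {j : Fin m} (hj : (pathGraph m).degree j ≤ 1) :
    ∃ i i' : Fin 4, (gridGraph 4 m).Adj (i, j) (i', j) ∧ (i, j) ∈ A ∧ (i', j) ∈ A := by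
  have hdeg (i : Fin 4) : (gridGraph 4 m).degree (i, j) ≤ (pathGraph 4).degree i + 1 := by
    rw [gridGraph_degree]; omega
  have hrow (i : Fin 4) : (pathGraph 4).degree i = if i = 0 ∨ i = 3 then 1 else 2 := by
    fin_cases i <;> simp [pathGraph_degree]
  have hcorner (i : Fin 4) (hi : i = 0 ∨ i = 3) : (i, j) ∈ A :=
    mem_coe.mp <| (hA _).mem_of_degree_lt (by have := hdeg i; simp [hrow, hi] at this; omega)
  have hadj (i i' : Fin 4) (h : (i : ℕ) + 1 = i') : (gridGraph 4 m).Adj (i, j) (i', j) :=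
    gridGraph_adj.mpr (Or.inl ⟨pathGraph_adj.mpr (Or.inl h), rfl⟩)
  rcases (hA (1, j)).mem_or_mem_of_adj (q := (2, j)) (hadj 1 2 rfl)
    (by have := hdeg 1; simp [hrow] at this; omega) (by have := hdeg 2; simp [hrow] at this; omega)
    with h | h
  · exact ⟨0, 1, hadj 0 1 rfl, hcorner 0 (by simp), mem_coe.mp h⟩
  · exact ⟨2, 3, hadj 2 3 rfl, mem_coe.mp h, hcorner 3 (by simp)⟩

theorem Percolates.le_card (hm : 2 ≤ m) (hA : Percolates (gridGraph 4 m) 3 A) :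
    5 * (m + 1) / 3 + 1 ≤ #A := by
  have hend (j : Fin m) (hj : (j : ℕ) = 0 ∨ (j : ℕ) + 1 = m) :
      (pathGraph m).degree j ≤ 1 := by
    rw [pathGraph_degree]; split_ifs <;> omega
  let j₀ : Fin m := ⟨0, by omega⟩
  let j₁ : Fin m := ⟨m - 1, by omega⟩
  have hj : j₀ ≠ j₁ := by simp [j₀, j₁, Fin.ext_iff]; omega
  obtain ⟨i, i', hadj, hi, hi'⟩ :=
    hA.exists_adj_mem_of_degree_le_one (hend j₀ (by simp [j₀]))
  obtain ⟨k, k', hadj', hk, hk'⟩ :=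
    hA.exists_adj_mem_of_degree_le_one (hend j₁ (by simp [j₁]; omega))
  have hedges : 2 ≤ #((gridGraph 4 m).edgeFinset ∩ A.sym2) := by
    calc 2 = #{s((i, j₀), (i', j₀)), s((k, j₁), (k', j₁))} :=
          (card_pair (by simp [hj])).symm
      _ ≤ _ := card_le_card (by
          intro e he
          rcases mem_insert.mp he with rfl | he
          · simp [*]
          · rw [mem_singleton.mp he]; simp [*])
  have hbound := hA.mul_card_compl_add_le
  rw [card_edgeFinset_gridGraph, Fintype.card_prod, Fintype.card_fin, Fintype.card_fin] at hbound
  have := card_le_univ A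
  simp only [Fintype.card_prod, Fintype.card_fin] at this
  omega

end LowerBound

section UpperBound

def IsRemovedColumn (m j : ℕ) : Prop := j % 3 = 0 ∧ 3 ≤ j ∧ j + 3 ≤ m

instance (m j : ℕ) : Decidable (IsRemovedColumn m j) := by unfold IsRemovedColumn; infer_instance

def IsRemoved (m i j : ℕ) : Prop := IsRemovedColumn m j ∧ (i = 1 ∨ i = 2) ∧ (i + j) % 2 = 1

def IsSeed (m i j : ℕ) : Prop :=
  (i + j) % 2 = 1 ∧ ¬IsRemoved m i j ∨ (i = 0 ∨ i = 3) ∧ (j = 0 ∨ j + 1 = m)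

instance (m i j : ℕ) : Decidable (IsSeed m i j) := by unfold IsSeed IsRemoved; infer_instance

def seedSet (m : ℕ) : Finset (Fin 4 × Fin m) := {v | IsSeed m v.1 v.2}

variable {m : ℕ}

theorem mem_seedSet {v : Fin 4 × Fin m} : v ∈ seedSet m ↔ IsSeed m v.1 v.2 := by
  simp [seedSet]

theorem infected_of_isRemoved {v : Fin 4 × Fin m} (hv : IsRemoved m v.1 v.2) :
    Infected (gridGraph 4 m) 3 (seedSet m) v := by
  obtain ⟨i, j⟩ := v
  obtain ⟨⟨hj3, hj, hjm⟩, hi12, hodd⟩ :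
    IsRemovedColumn m j ∧ ((i : ℕ) = 1 ∨ (i : ℕ) = 2) ∧ ((i : ℕ) + j) % 2 = 1 := hv
  -- `(3 * (i - 1), j)` is the neighbour in the boundary row; the other three neighbours are
  -- interior even cells whose neighbours other than `(i, j)` are all seeds.
  refine Infected.of_forall_adj_ne (⟨3 * (i - 1), by omega⟩, j) ?_ fun ⟨a, b⟩ hab hne => ?_
  · exact four_le_gridGraph_degree (by omega) (by omega) (by omega) (by omega)
  have heven : ((a : ℕ) + b) % 2 = 0 := by have := mod_two_ne_of_gridGraph_adj hab; omega
  simp only [gridGraph_adj_iff_val, ne_eq, Prod.ext_iff, Fin.ext_iff] at hab hne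
  refine Infected.of_forall_adj_ne (i, j) ?_ fun ⟨a', b'⟩ hab' hne' =>
    .init (mem_seedSet.mpr ?_)
  · exact four_le_gridGraph_degree (by omega) (by omega) (by omega) (by omega)
  show IsSeed m a' b'
  refine Or.inl ⟨by have := mod_two_ne_of_gridGraph_adj hab'; omega,
    fun ⟨⟨hb3, _⟩, ha12, _⟩ => ?_⟩
  simp only [gridGraph_adj_iff_val, ne_eq, Prod.ext_iff, Fin.ext_iff] at hab' hne'
  rcases hab with ⟨ha | ha, hb⟩ | ⟨hb | hb, ha⟩ <;>
    rcases hab' with ⟨ha' | ha', hb'⟩ | ⟨hb' | hb', ha'⟩ <;> omega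

theorem percolates_seedSet (hm : 2 ≤ m) : Percolates (gridGraph 4 m) 3 (seedSet m) := by
  have hodd (i : Fin 4) (j : Fin m) (h : ((i : ℕ) + j) % 2 = 1) :
      Infected (gridGraph 4 m) 3 (seedSet m) (i, j) := by
    by_cases hr : IsRemoved m i j
    · exact infected_of_isRemoved hr
    · exact .init (mem_seedSet.mpr (Or.inl ⟨h, hr⟩))
  rintro ⟨i, j⟩
  by_cases h : ((i : ℕ) + j) % 2 = 1
  · exact hodd i j h
  by_cases hc : ((i : ℕ) = 0 ∨ (i : ℕ) = 3) ∧ ((j : ℕ) = 0 ∨ (j : ℕ) + 1 = m)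
  · exact .init (mem_seedSet.mpr (Or.inr hc))
  refine Infected.of_forall_adj ?_ fun ⟨a, b⟩ hab =>
    hodd a b (by have := mod_two_ne_of_gridGraph_adj hab; omega)
  simp only [gridGraph_degree, pathGraph_degree]
  split_ifs <;> omega

theorem card_seedSet_add (hm : 2 ≤ m) : #(seedSet m) + (m - 3) / 3 = 2 * m + 2 := by
  have hcol (j : Fin m) : ∑ i : Fin 4, (if IsSeed m i j then 1 else 0) +
      (if IsRemovedColumn m j then 1 else 0) =
      2 + (if (j : ℕ) = 0 then 1 else 0) + (if (j : ℕ) = m - 1 then 1 else 0) := by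
    rw [Fin.sum_univ_four]
    by_cases hR : IsRemovedColumn m j <;>
      rcases Nat.mod_two_eq_zero_or_one j with hp | hp <;>
      simp only [IsSeed, IsRemoved, hR, Fin.isValue, Fin.coe_ofNat_eq_mod,
        Nat.add_mod _ (j : ℕ), hp] <;>
      norm_num <;> unfold IsRemovedColumn at hR <;> split_ifs <;> omega
  have hrem : ∑ j : Fin m, (if IsRemovedColumn m j then 1 else 0) = (m - 3) / 3 := by
    rw [Fin.sum_univ_eq_sum_range (fun j => if IsRemovedColumn m j then 1 else 0), sum_boole,
      Nat.cast_id, ← Nat.Ioc_filter_dvd_card_eq_div]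
    congr 1; ext j
    rw [mem_filter, mem_filter, mem_range, mem_Ioc, IsRemovedColumn]
    omega
  have hend (k : ℕ) (hk : k < m) : ∑ j : Fin m, (if (j : ℕ) = k then 1 else 0) = 1 := by
    rw [Fin.sum_univ_eq_sum_range (fun j => if j = k then 1 else 0), sum_ite_eq']
    simp [hk]
  have hsum := sum_congr rfl fun j (_ : j ∈ univ) => hcol j
  simp only [sum_add_distrib, hrem, sum_const, card_univ, Fintype.card_fin, smul_eq_mul] at hsum
  rw [hend 0 (by omega), hend (m - 1) (by omega)] at hsum
  simp only [seedSet, card_filter, Fintype.sum_prod_type_right]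
  omega

end UpperBound

theorem stmt_9 (m : ℕ) (hm : 4 ≤ m) :
    5 * (m + 1) / 3 + 1 ≤ percNum (Fin 4 × Fin m) (gridGraph 4 m) 3 ∧
    percNum (Fin 4 × Fin m) (gridGraph 4 m) 3 ≤ 5 * (m + 1) / 3 + 2 := by
  have hseed := percolates_seedSet (m := m) (by omega)
  refine ⟨le_percNum ⟨_, hseed⟩ fun A hA => hA.le_card (by omega), ?_⟩
  have := card_seedSet_add (m := m) (by omega)
  exact (percNum_le hseed).trans (by omega)
end

section
/- For m ≥ 6 even, the 3-percolation number of the grid P₅ □ Pₘ is at least 2m + 3 (i.e., no 3-percolating set of size 2m + 2 exists). -/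
open SimpleGraph

/-! Order the vertices outside a `3`-percolating set `A` of the `5 × m` grid by infection time.
Each has three earlier neighbours, the edges to them are distinct (an edge determines its later
endpoint), and none of them joins two vertices of `A`; hence `3 (5m - |A|) + e(A) ≤ 9m - 5`, where
`e(A)` counts the edges inside `A`. Along the top and bottom rows every vertex has degree at most
`3` and the corners degree `2`, so `A` contains the corners and meets every edge of these rows.
A row has an even number `m` of vertices, so `A` contains an edge of each of them: `e(A) ≥ 2`,
which gives `|A| ≥ 2m + 3`. -/

open Finset

section Bootstrap

variable {V : Type*} {G : SimpleGraph V} {r : ℕ} {A : Set V} {u v : V}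

def infectedWithin (G : SimpleGraph V) (r : ℕ) (A : Set V) : ℕ → Set V
  | 0 => A
  | n + 1 => infectedWithin G r A n ∪
      {v | ∃ T : Finset V, r ≤ #T ∧ ∀ u ∈ T, G.Adj u v ∧ u ∈ infectedWithin G r A n}

lemma infectedWithin_mono : Monotone (infectedWithin G r A) :=
  monotone_nat_of_le_succ fun _ => Set.subset_union_left

noncomputable def infectionTime (G : SimpleGraph V) (r : ℕ) (A : Set V) (v : V) : ℕ :=
  sInf {n | v ∈ infectedWithin G r A n}

namespace Infected

lemma exists_mem_infectedWithin (h : Infected G r A v) : ∃ n, v ∈ infectedWithin G r A n := by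
  induction h with
  | init hv => exact ⟨0, hv⟩
  | step T hcard hadj _ ih =>
    choose n hn using ih
    refine ⟨(T.attach.sup fun u => n u.1 u.2) + 1, Or.inr ⟨T, hcard, fun u hu => ⟨hadj u hu, ?_⟩⟩⟩
    exact infectedWithin_mono (le_sup (mem_attach _ ⟨u, hu⟩)) (hn u hu)

lemma exists_earlier_neighbors (h : Infected G r A v) (hv : v ∉ A) :
    ∃ T : Finset V, r ≤ #T ∧ ∀ u ∈ T, G.Adj u v ∧ infectionTime G r A u < infectionTime G r A v := by
  have hmem : v ∈ infectedWithin G r A (infectionTime G r A v) :=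
    Nat.sInf_mem h.exists_mem_infectedWithin
  rcases ht : infectionTime G r A v with _ | n
  · rw [ht] at hmem
    exact absurd hmem hv
  rw [ht] at hmem
  rcases hmem with hmem | ⟨T, hcard, hT⟩
  · have : infectionTime G r A v ≤ n := Nat.sInf_le hmem
    omega
  · exact ⟨T, hcard, fun u hu => ⟨(hT u hu).1, Nat.lt_succ_of_le (Nat.sInf_le (hT u hu).2)⟩⟩

lemma mem_of_degree_lt_s15 [Fintype (G.neighborSet v)] (h : Infected G r A v) (hdeg : G.degree v < r) :
    v ∈ A := by
  by_contra hv
  obtain ⟨T, hcard, hT⟩ := h.exists_earlier_neighbors hv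
  have hsub : T ⊆ G.neighborFinset v := fun u hu => (G.mem_neighborFinset v u).2 (hT u hu).1.symm
  have := hcard.trans (card_le_card hsub)
  rw [card_neighborFinset_eq_degree] at this
  omega

lemma infectionTime_lt_of_degree_le [Fintype (G.neighborSet v)] (h : Infected G r A v) (hv : v ∉ A)
    (hdeg : G.degree v ≤ r) (huv : G.Adj u v) : infectionTime G r A u < infectionTime G r A v := by
  obtain ⟨T, hcard, hT⟩ := h.exists_earlier_neighbors hv
  have hsub : T ⊆ G.neighborFinset v := fun w hw => (G.mem_neighborFinset v w).2 (hT w hw).1.symm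
  have hT_eq : T = G.neighborFinset v :=
    eq_of_subset_of_card_le hsub (by rw [card_neighborFinset_eq_degree]; omega)
  exact (hT u (hT_eq ▸ (G.mem_neighborFinset v u).2 huv.symm)).2

end Infected

namespace Percolates

lemma mem_or_mem_of_adj [Fintype (G.neighborSet u)] [Fintype (G.neighborSet v)]
    (hA : Percolates G r A) (huv : G.Adj u v) (hu : G.degree u ≤ r) (hv : G.degree v ≤ r) :
    u ∈ A ∨ v ∈ A := by
  by_contra! h
  have := (hA v).infectionTime_lt_of_degree_le h.2 hv huv
  have := (hA u).infectionTime_lt_of_degree_le h.1 hu huv.symm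
  omega

lemma mul_card_compl_add_card_inter_sym2_le [Fintype V] [DecidableEq V] [DecidableRel G.Adj]
    {A : Finset V} (hA : Percolates G r ↑A) :
    r * #Aᶜ + #(G.edgeFinset ∩ A.sym2) ≤ #G.edgeFinset := by
  choose! T hT using fun v (hv : v ∈ Aᶜ) => (hA v).exists_earlier_neighbors (by simpa using hv)
  have hsigma : r * #Aᶜ ≤ #(Aᶜ.sigma T) := by
    rw [card_sigma, mul_comm, ← smul_eq_mul, ← sum_const]
    exact sum_le_sum fun v hv => (hT v hv).1
  have hmaps : Set.MapsTo (fun p : (_ : V) × V => s(p.2, p.1)) ↑(Aᶜ.sigma T)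
      ↑(G.edgeFinset \ A.sym2) := by
    rintro ⟨v, u⟩ hp
    simp only [coe_sigma, Set.mem_sigma_iff, mem_coe] at hp
    simp only [coe_sdiff, Set.mem_sdiff, mem_coe, mem_edgeFinset, mem_edgeSet, mem_sym2_iff,
      Sym2.mem_iff, forall_eq_or_imp, forall_eq]
    exact ⟨((hT v hp.1).2 u hp.2).1, fun h => mem_compl.mp hp.1 h.2⟩
  have hinj : Set.InjOn (fun p : (_ : V) × V => s(p.2, p.1)) ↑(Aᶜ.sigma T) := by
    rintro ⟨v, u⟩ hp ⟨v', u'⟩ hp' heq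
    simp only [coe_sigma, Set.mem_sigma_iff, mem_coe] at hp hp'
    have h := ((hT v hp.1).2 u hp.2).2
    have h' := ((hT v' hp'.1).2 u' hp'.2).2
    rcases Sym2.eq_iff.mp heq with ⟨h₁, h₂⟩ | ⟨h₁, h₂⟩ <;> simp only at h₁ h₂ <;> subst h₁ h₂
    · rfl
    · omega
  have := card_le_card_of_injOn _ hmaps hinj
  have := card_sdiff_add_card_inter G.edgeFinset A.sym2
  omega

end Percolates

end Bootstrap

section PathGraph

variable {n : ℕ}

lemma degree_pathGraph_le_card (j : Fin n) [Fintype ((pathGraph n).neighborSet j)] (s : Finset ℕ)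
    (h : ∀ i, (pathGraph n).Adj j i → (i : ℕ) ∈ s) : (pathGraph n).degree j ≤ #s := by
  rw [← card_neighborFinset_eq_degree]
  exact card_le_card_of_injOn Fin.val (fun i hi => h i ((mem_neighborFinset _ _ _).1 hi))
    Fin.val_injective.injOn

lemma degree_pathGraph_le_two (j : Fin n) [Fintype ((pathGraph n).neighborSet j)] :
    (pathGraph n).degree j ≤ 2 :=
  (degree_pathGraph_le_card j {(j : ℕ) - 1, (j : ℕ) + 1} fun i hi => by
    rw [pathGraph_adj] at hi
    simp only [mem_insert, mem_singleton]
    omega).trans card_le_two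

lemma degree_pathGraph_le_one (j : Fin n) [Fintype ((pathGraph n).neighborSet j)]
    (hj : (j : ℕ) = 0 ∨ (j : ℕ) + 1 = n) : (pathGraph n).degree j ≤ 1 := by
  have hs : ∀ i, (pathGraph n).Adj j i → (i : ℕ) ∈ ({if (j : ℕ) = 0 then 1 else n - 2} : Finset ℕ) := by
    intro i hi
    rw [pathGraph_adj] at hi
    have := i.isLt
    split_ifs <;> simp only [mem_singleton] <;> omega
  exact (degree_pathGraph_le_card j _ hs).trans (card_singleton _).le

lemma card_edgeFinset_pathGraph (n : ℕ) [DecidableRel (pathGraph n).Adj] :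
    #(pathGraph n).edgeFinset = n - 1 := by
  rcases n with _ | n
  · simp [Subsingleton.elim (pathGraph 0) ⊥]
  have hE : (pathGraph (n + 1)).edgeFinset = univ.image fun i : Fin n => s(i.castSucc, i.succ) := by
    ext e
    induction e using Sym2.ind with
    | _ a b =>
      simp only [mem_edgeFinset, mem_edgeSet, pathGraph_adj, mem_image, mem_univ, true_and,
        Sym2.eq_iff, Fin.ext_iff, Fin.val_castSucc, Fin.val_succ]
      constructor
      · rintro (h | h)
        · exact ⟨⟨a, by omega⟩, Or.inl ⟨rfl, h⟩⟩
        · exact ⟨⟨b, by omega⟩, Or.inr ⟨rfl, h⟩⟩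
      · rintro ⟨i, ⟨h₁, h₂⟩ | ⟨h₁, h₂⟩⟩ <;> omega
  rw [hE, card_image_of_injective _ fun i i' h => by simp [Fin.ext_iff] at h; omega]
  simp

end PathGraph

lemma card_edgeFinset_boxProd {α β : Type*} [Fintype α] [Fintype β] (G : SimpleGraph α)
    (H : SimpleGraph β) [DecidableRel G.Adj] [DecidableRel H.Adj] [DecidableRel (G □ H).Adj] :
    #(G □ H).edgeFinset = Fintype.card β * #G.edgeFinset + Fintype.card α * #H.edgeFinset := by
  have h : 2 * #(G □ H).edgeFinset =
      Fintype.card β * (2 * #G.edgeFinset) + Fintype.card α * (2 * #H.edgeFinset) := calc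
    2 * #(G □ H).edgeFinset = ∑ a : α, ∑ b : β, (G.degree a + H.degree b) := by
      rw [← sum_degrees_eq_twice_card_edges, Fintype.sum_prod_type]
      exact sum_congr rfl fun a _ => sum_congr rfl fun b _ => by rw [degree_boxProd]
    _ = _ := by
      simp only [sum_add_distrib, sum_const, card_univ, smul_eq_mul, ← mul_sum,
        sum_degrees_eq_twice_card_edges]
  linarith

lemma exists_and_succ_of_odd {Q : ℕ → Prop} {n : ℕ} (hn : Odd n) (h₀ : Q 0) (hₙ : Q n)
    (hcover : ∀ j < n, Q j ∨ Q (j + 1)) : ∃ j < n, Q j ∧ Q (j + 1) := by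
  by_contra! hsep
  have hparity : ∀ j ≤ n, (Q j ↔ Even j) := by
    intro j
    induction j with
    | zero => simpa using h₀
    | succ k ih =>
      intro hk
      rw [Nat.even_add_one, ← ih (by omega)]
      have := hcover k (by omega)
      have := hsep k (by omega)
      tauto
  exact Nat.not_even_iff_odd.2 hn ((hparity n le_rfl).1 hₙ)

section Grid

variable {n m : ℕ} {i : Fin n}

lemma degree_boxProd_pathGraph_le_three (hi : (i : ℕ) = 0 ∨ (i : ℕ) + 1 = n) (j : Fin m)
    [Fintype ((pathGraph n □ pathGraph m).neighborSet (i, j))] :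
    (pathGraph n □ pathGraph m).degree (i, j) ≤ 3 := by
  classical
  exact (degree_boxProd (i, j)).trans_le
    (Nat.add_le_add (degree_pathGraph_le_one _ hi) (degree_pathGraph_le_two _))

lemma degree_boxProd_pathGraph_lt_three (hi : (i : ℕ) = 0 ∨ (i : ℕ) + 1 = n) {j : Fin m}
    (hj : (j : ℕ) = 0 ∨ (j : ℕ) + 1 = m) [Fintype ((pathGraph n □ pathGraph m).neighborSet (i, j))] :
    (pathGraph n □ pathGraph m).degree (i, j) < 3 := by
  classical
  exact (degree_boxProd (i, j)).trans_lt <| Nat.lt_of_le_of_lt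
    (Nat.add_le_add (degree_pathGraph_le_one _ hi) (degree_pathGraph_le_one _ hj)) (by norm_num)

variable [DecidableRel (pathGraph n □ pathGraph m).Adj] {A : Finset (Fin n × Fin m)}

lemma exists_mem_edgeFinset_inter_sym2_of_boundary_row
    (hA : Percolates (pathGraph n □ pathGraph m) 3 ↑A) (hm : m ≠ 0) (heven : Even m)
    (hi : (i : ℕ) = 0 ∨ (i : ℕ) + 1 = n) :
    ∃ e ∈ (pathGraph n □ pathGraph m).edgeFinset ∩ A.sym2, ∀ x ∈ e, x.1 = i := by
  let Q (j : ℕ) : Prop := ∃ h : j < m, (i, ⟨j, h⟩) ∈ A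
  have hend (j : Fin m) (hj : (j : ℕ) = 0 ∨ (j : ℕ) + 1 = m) : Q j :=
    ⟨j.isLt, (hA _).mem_of_degree_lt_s15 (degree_boxProd_pathGraph_lt_three hi hj)⟩
  have hcover (j : ℕ) (hj : j < m - 1) : Q j ∨ Q (j + 1) := by
    have hadj : (pathGraph n □ pathGraph m).Adj (i, ⟨j, by omega⟩) (i, ⟨j + 1, by omega⟩) :=
      boxProd_adj_right.2 (pathGraph_adj.2 (Or.inl rfl))
    rcases hA.mem_or_mem_of_adj hadj (degree_boxProd_pathGraph_le_three hi _)
      (degree_boxProd_pathGraph_le_three hi _) with h | h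
    · exact Or.inl ⟨_, h⟩
    · exact Or.inr ⟨_, h⟩
  obtain ⟨j, -, ⟨hj₁, hA₁⟩, ⟨hj₂, hA₂⟩⟩ : ∃ j < m - 1, Q j ∧ Q (j + 1) :=
    exists_and_succ_of_odd (by rcases heven with ⟨k, rfl⟩; exact ⟨k - 1, by omega⟩)
      (hend ⟨0, by omega⟩ (Or.inl rfl)) (hend ⟨m - 1, by omega⟩ (Or.inr (by simp; omega))) hcover
  refine ⟨s((i, ⟨j, hj₁⟩), (i, ⟨j + 1, hj₂⟩)), mem_inter.2 ⟨?_, ?_⟩, ?_⟩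
  · exact mem_edgeFinset.2 (boxProd_adj_right.2 (pathGraph_adj.2 (Or.inl rfl)))
  · simp [mem_sym2_iff, hA₁, hA₂]
  · simp

lemma two_le_card_edgeFinset_inter_sym2 (hA : Percolates (pathGraph n □ pathGraph m) 3 ↑A) (hn : 2 ≤ n)
    (hm : m ≠ 0) (heven : Even m) : 2 ≤ #((pathGraph n □ pathGraph m).edgeFinset ∩ A.sym2) := by
  obtain ⟨e, he, hfirst⟩ := exists_mem_edgeFinset_inter_sym2_of_boundary_row hA hm heven
    (i := ⟨0, by omega⟩) (Or.inl rfl)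
  obtain ⟨e', he', hlast⟩ := exists_mem_edgeFinset_inter_sym2_of_boundary_row hA hm heven
    (i := ⟨n - 1, by omega⟩) (Or.inr (by simp only; omega))
  have hne : e ≠ e' := by
    rintro rfl
    have := (hfirst _ e.out_fst_mem).symm.trans (hlast _ e.out_fst_mem)
    simp only [Fin.ext_iff] at this
    omega
  rw [← card_pair hne]
  exact card_le_card (insert_subset he (singleton_subset_iff.2 he'))

end Grid

theorem stmt_15 (m : ℕ) (hm : 6 ≤ m) (heven : Even m) :
    2 * m + 3 ≤ percNum (Fin 5 × Fin m) (gridGraph 5 m) 3 := by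
  classical
  unfold gridGraph
  refine le_csInf ⟨_, univ, rfl, fun v => Infected.init (mem_univ v)⟩ ?_
  rintro _ ⟨A, rfl, hA⟩
  have hcount := hA.mul_card_compl_add_card_inter_sym2_le
  have hinside := two_le_card_edgeFinset_inter_sym2 hA (by norm_num) (by omega) heven
  rw [card_edgeFinset_boxProd, card_edgeFinset_pathGraph, card_edgeFinset_pathGraph, card_compl]
    at hcount
  simp only [Fintype.card_prod, Fintype.card_fin] at hcount
  have hA_le : #A ≤ 5 * m := by simpa using A.card_le_univ
  omega
end
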